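/- The function t ↦ t/(1 − e^{−t}) is convex on the interval (0,∞). -/

import Mathlib

open Real Set

/-!
The second derivative of `t / (1 - e⁻ᵗ)` is `e⁻ᵗ (t - 2 + (t + 2) e⁻ᵗ) / (1 - e⁻ᵗ)³`. The factor
`t - 2 + (t + 2) e⁻ᵗ` vanishes at `0` and is monotone, its derivative being `1 - (t + 1) e⁻ᵗ ≥ 0`
by `t + 1 ≤ eᵗ`.
-/

lemma add_one_mul_exp_neg_le_one (x : ℝ) : (x + 1) * exp (-x) ≤ 1 :=
  calc (x + 1) * exp (-x) ≤ exp x * exp (-x) := by gcongr; exact add_one_le_exp x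
    _ = 1 := by rw [← exp_add, add_neg_cancel, exp_zero]

lemma hasDerivAt_exp_neg (x : ℝ) : HasDerivAt (fun t => exp (-t)) (-exp (-x)) x := by
  simpa using (hasDerivAt_neg x).exp

lemma monotone_sub_two_add_mul_exp_neg : Monotone fun x : ℝ => x - 2 + (x + 2) * exp (-x) := by
  refine monotone_of_hasDerivAt_nonneg (f' := fun x => 1 - (x + 1) * exp (-x)) (fun x => ?_)
    fun x => sub_nonneg.2 (add_one_mul_exp_neg_le_one x)
  refine (((hasDerivAt_id' x).sub_const 2).add
    (((hasDerivAt_id' x).add_const 2).mul (hasDerivAt_exp_neg x))).congr_deriv ?_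
  ring

lemma sub_two_add_mul_exp_neg_nonneg {x : ℝ} (hx : 0 ≤ x) : 0 ≤ x - 2 + (x + 2) * exp (-x) := by
  simpa using monotone_sub_two_add_mul_exp_neg hx

lemma one_sub_exp_neg_ne_zero {x : ℝ} (hx : x ≠ 0) : 1 - exp (-x) ≠ 0 := by
  rw [sub_ne_zero, ne_comm, Ne, exp_eq_one_iff, neg_eq_zero]
  exact hx

lemma hasDerivAt_one_sub_exp_neg (x : ℝ) :
    HasDerivAt (fun t => 1 - exp (-t)) (exp (-x)) x := by
  simpa using (hasDerivAt_exp_neg x).const_sub 1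

lemma hasDerivAt_div_one_sub_exp_neg {x : ℝ} (hx : x ≠ 0) :
    HasDerivAt (fun t => t / (1 - exp (-t)))
      ((1 - exp (-x) - x * exp (-x)) / (1 - exp (-x)) ^ 2) x := by
  refine ((hasDerivAt_id' x).div (hasDerivAt_one_sub_exp_neg x)
    (one_sub_exp_neg_ne_zero hx)).congr_deriv ?_
  ring

lemma hasDerivAt_deriv_div_one_sub_exp_neg {x : ℝ} (hx : x ≠ 0) :
    HasDerivAt (fun t => (1 - exp (-t) - t * exp (-t)) / (1 - exp (-t)) ^ 2)
      (exp (-x) * (x - 2 + (x + 2) * exp (-x)) / (1 - exp (-x)) ^ 3) x := by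
  have hnum : HasDerivAt (fun t => 1 - exp (-t) - t * exp (-t)) (x * exp (-x)) x := by
    refine ((hasDerivAt_one_sub_exp_neg x).sub
      ((hasDerivAt_id' x).mul (hasDerivAt_exp_neg x))).congr_deriv ?_
    ring
  have hden := (hasDerivAt_one_sub_exp_neg x).fun_pow 2
  have hne := one_sub_exp_neg_ne_zero hx
  refine (hnum.div hden (pow_ne_zero 2 hne)).congr_deriv ?_
  field_simp
  ring

/-- The function `t ↦ t/(1 − e^{−t})` is convex on `(0,∞)`. -/
theorem convexOn_div_one_sub_exp_neg :
    ConvexOn ℝ (Ioi (0 : ℝ)) (fun t : ℝ => t / (1 - Real.exp (-t))) := by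
  refine convexOn_of_hasDerivWithinAt2_nonneg (convex_Ioi 0)
    (fun x hx => (hasDerivAt_div_one_sub_exp_neg hx.ne').continuousAt.continuousWithinAt)
    (fun x hx => (hasDerivAt_div_one_sub_exp_neg (interior_subset hx).ne').hasDerivWithinAt)
    (fun x hx => (hasDerivAt_deriv_div_one_sub_exp_neg (interior_subset hx).ne').hasDerivWithinAt)
    fun x hx => ?_
  rw [interior_Ioi, mem_Ioi] at hx
  have hden : 0 < 1 - exp (-x) := sub_pos.2 (exp_lt_one_iff.2 (neg_neg_of_pos hx))
  have hnum := sub_two_add_mul_exp_neg_nonneg hx.le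
  positivity
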